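/- Let P, X, Y be real Banach spaces, K ⊆ Y a pointed closed convex cone with nonempty interior, and K̃ ⊆ Y a closed convex cone with K̃ ⊆ int K ∪ {0}. Let f : P × X → Y be K̃-convex and K̃-closed, C : P ⇉ X closed convex, (p̄, x̄) ∈ gph S^w with ȳ = f(p̄, x̄), and H : P ⇉ P × X given by H(p) = {p} × C(p). Assume (i) ℝ⁺(rge H − dom f) is a closed linear subspace of P × X, (ii) ℝ⁺(P − dom C) is a closed linear subspace of P, and (iii) F is K̃-dominated by 𝓦 near p̄, i.e., F(p) ⊆ 𝓦(p) + K̃ for all p in some neighborhood of p̄. Then for every y* ∈ Y*, D̂*(𝓦 + K̃)(p̄, ȳ)(y*) = ⋃_{(p*, x*) ∈ D*(f + K̃)(p̄, x̄)(y*)} {p* + q* : q* ∈ D*C(p̄, x̄)(x*)}; in particular, for every y* ∈ K̃*, D̂*(𝓦 + K̃)(p̄, ȳ)(y*) = ⋃_{(p*, x*) ∈ ∂⟨y*, f⟩(p̄, x̄)} {p* + q* : q* ∈ D*C(p̄, x̄)(x*)}. -/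

import Mathlib

open Set Pointwise Topology Filter

/-- The graph of a set-valued map. -/
def gph {α β : Type*} (H : α → Set β) : Set (α × β) := {q | q.2 ∈ H q.1}

/-- The domain of a set-valued map. -/
def dom {α β : Type*} (H : α → Set β) : Set α := {a | (H a).Nonempty}

/-- The coderivative (in the sense of convex analysis) of a set-valued map `H` at
`(a, b) ∈ gph H`:  `φ ∈ coderiv H a b ψ` iff `(φ, -ψ) ∈ N((a,b), gph H)`, that is,
`⟨φ, u - a⟩ - ⟨ψ, v - b⟩ ≤ 0` for all `(u, v) ∈ gph H`. -/
def coderiv {α β : Type*} [NormedAddCommGroup α] [NormedSpace ℝ α]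
    [NormedAddCommGroup β] [NormedSpace ℝ β]
    (H : α → Set β) (a : α) (b : β) (ψ : β →L[ℝ] ℝ) : Set (α →L[ℝ] ℝ) :=
  {φ | ∀ u : α, ∀ v ∈ H u, φ (u - a) - ψ (v - b) ≤ 0}

/-- The Fréchet coderivative of a set-valued map `H` at `(a, b) ∈ gph H`, with the sum
norm `‖(u,v)‖ = ‖u‖ + ‖v‖` on the product:  `φ ∈ fCoderiv H a b ψ` iff
`(φ, -ψ) ∈ N̂((a,b), gph H)`, the Fréchet normal cone, expressed by its standard
`ε`–`δ` characterization. -/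
def fCoderiv {α β : Type*} [NormedAddCommGroup α] [NormedSpace ℝ α]
    [NormedAddCommGroup β] [NormedSpace ℝ β]
    (H : α → Set β) (a : α) (b : β) (ψ : β →L[ℝ] ℝ) : Set (α →L[ℝ] ℝ) :=
  {φ | ∀ ε > (0:ℝ), ∃ δ > (0:ℝ), ∀ u : α, ∀ v ∈ H u, ‖u - a‖ + ‖v - b‖ < δ →
      φ (u - a) - ψ (v - b) ≤ ε * (‖u - a‖ + ‖v - b‖)}

/-- The subdifferential (in the sense of convex analysis) of `g : α → ℝ` at `a`. -/
def subdiff {α : Type*} [NormedAddCommGroup α] [NormedSpace ℝ α]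
    (g : α → ℝ) (a : α) : Set (α →L[ℝ] ℝ) :=
  {φ | ∀ u : α, φ (u - a) ≤ g u - g a}


/-!
Near `pb` the maps `Fw + Kt` and `F + Kt` have the same graph (domination, and `Kt + Kt ⊆ Kt`),
and `gph (F + Kt)` is convex; so a Fréchet normal to the first is a global normal to the second.
A global normal `w` to `F + Kt` at `(pb, yb)` forces `ψ ≥ 0` on `Kt` and makes `w ∘ fst` a
subgradient of `ψ ∘ f + δ_{gph C}` at `(pb, xb)`. The function `ψ ∘ f` is convex, and a
Baire-category (Robinson–Ursescu) argument on the closed convex set `gph (f + Kt)` bounds it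
above on a ball, so it is continuous. The Moreau–Rockafellar sum rule, proved by separating its
strict epigraph from an affine hypograph over `gph C`, then splits the subgradient into
`(p*, x*) ∈ ∂(ψ ∘ f) = D*(f + Kt)(ψ)` and a normal `(q*, -x*)` to `gph C`.
-/

lemma mem_singleton_add_iff {E : Type*} [AddCommGroup E] {K : Set E} {a v : E} :
    v ∈ ({a} : Set E) + K ↔ v - a ∈ K := by
  simp [Set.singleton_add, neg_add_eq_sub]

lemma add_mem_of_convex_of_smul_mem {E : Type*} [AddCommGroup E] [Module ℝ E] {K : Set E}
    (hconv : Convex ℝ K) (hcone : ∀ t : ℝ, 0 ≤ t → ∀ y ∈ K, t • y ∈ K) {x y : E}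
    (hx : x ∈ K) (hy : y ∈ K) : x + y ∈ K := by
  have h := hcone 2 zero_le_two _ (hconv hx hy (by norm_num : (0:ℝ) ≤ 1/2)
    (by norm_num : (0:ℝ) ≤ 1/2) (by norm_num))
  convert h using 1
  module

section Coderivative

variable {α β : Type*} [NormedAddCommGroup α] [NormedSpace ℝ α]
  [NormedAddCommGroup β] [NormedSpace ℝ β] {a : α} {b : β} {ψ : β →L[ℝ] ℝ}

lemma coderiv_subset_fCoderiv {H H' : α → Set β} (hHH' : ∀ u, H u ⊆ H' u) :
    coderiv H' a b ψ ⊆ fCoderiv H a b ψ := by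
  intro φ hφ ε hε
  exact ⟨1, one_pos, fun u v hv _ => (hφ u v (hHH' u hv)).trans (by positivity)⟩

lemma fCoderiv_subset_coderiv {H H' : α → Set β} (hconv : Convex ℝ (gph H')) (hb : b ∈ H' a)
    (hloc : ∀ᶠ u in 𝓝 a, H' u ⊆ H u) : fCoderiv H a b ψ ⊆ coderiv H' a b ψ := by
  intro φ hφ u v hv
  set S := ‖u - a‖ + ‖v - b‖
  have hlin : Tendsto (fun t : ℝ => t * S) (𝓝[>] 0) (𝓝 0) := by
    have h : Tendsto (fun t : ℝ => t * S) (𝓝 0) (𝓝 (0 * S)) := tendsto_id.mul_const S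
    simpa using h.mono_left nhdsWithin_le_nhds
  refine ge_of_tendsto hlin ?_
  filter_upwards [self_mem_nhdsWithin] with ε hε
  obtain ⟨δ, hδ, hφδ⟩ := hφ ε hε
  have hpath : Tendsto (fun t : ℝ => a + t • (u - a)) (𝓝[>] 0) (𝓝 a) := by
    have h : Tendsto (fun t : ℝ => a + t • (u - a)) (𝓝 0) (𝓝 (a + (0:ℝ) • (u - a))) :=
      (Continuous.tendsto (by fun_prop) 0)
    simpa using h.mono_left nhdsWithin_le_nhds
  -- the segment from `(a, b)` to `(u, v)` stays in `gph H'`, and near `(a, b)` also in `gph H`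
  have hunit : ∀ᶠ t : ℝ in 𝓝[>] 0, t ∈ Ioo 0 1 := Ioo_mem_nhdsGT one_pos
  obtain ⟨t, ⟨ht, ht1⟩, hloc_t, ht_small⟩ :=
    (hunit.and ((hpath.eventually hloc).and (hlin.eventually (gt_mem_nhds hδ)))).exists
  have hmem : (a + t • (u - a), b + t • (v - b)) ∈ gph H' :=
    hconv.add_smul_sub_mem (x := (a, b)) (y := (u, v)) hb hv ⟨ht.le, ht1.le⟩
  have key := hφδ _ _ (hloc_t hmem) (by
    simpa [norm_smul, abs_of_pos ht, ← mul_add] using ht_small)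
  simp only [add_sub_cancel_left, map_smul, smul_eq_mul, norm_smul, Real.norm_eq_abs,
    abs_of_pos ht] at key
  nlinarith

lemma nonneg_of_mem_coderiv_add {S : α → Set β} {K : Set β} {φ : α →L[ℝ] ℝ} (hb : b ∈ S a)
    (hφ : φ ∈ coderiv (fun u => S u + K) a b ψ) : ∀ k ∈ K, 0 ≤ ψ k := by
  intro k hk
  simpa using hφ a (b + k) (add_mem_add hb hk)

variable {K : Set β} {f : α → β}

lemma coderiv_singleton_add_eq_subdiff (hK0 : 0 ∈ K) (hψ : ∀ k ∈ K, 0 ≤ ψ k) :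
    coderiv (fun u => ({f u} : Set β) + K) a (f a) ψ = subdiff (fun u => ψ (f u)) a := by
  ext φ
  refine ⟨fun hφ u => ?_, fun hφ u v hv => ?_⟩
  · have := hφ u (f u) (mem_singleton_add_iff.2 (by simpa using hK0))
    rw [map_sub ψ] at this
    simp only
    linarith
  · have hk := hψ _ (mem_singleton_add_iff.1 hv)
    have := hφ u
    rw [map_sub ψ] at hk ⊢
    simp only at this
    linarith

lemma convexOn_comp_of_convex_gph_singleton_add (hK0 : 0 ∈ K) (hψ : ∀ k ∈ K, 0 ≤ ψ k)
    (hconv : Convex ℝ (gph fun u => ({f u} : Set β) + K)) :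
    ConvexOn ℝ univ fun u => ψ (f u) := by
  refine ⟨convex_univ, fun u _ v _ s t hs ht hst => ?_⟩
  have hself : ∀ w, (w, f w) ∈ gph fun u => ({f u} : Set β) + K :=
    fun w => mem_singleton_add_iff.2 (by simpa using hK0)
  have hk := hψ _ (mem_singleton_add_iff.1 (hconv (hself u) (hself v) hs ht hst))
  simp only [Prod.fst_add, Prod.snd_add, Prod.smul_fst, Prod.smul_snd, map_sub, map_add,
    map_smul, smul_eq_mul] at hk ⊢
  linarith

end Coderivative

section RobinsonUrsescu

open Metric

variable {Z Y : Type*} [NormedAddCommGroup Z] [NormedSpace ℝ Z]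
  [NormedAddCommGroup Y] [NormedSpace ℝ Y]

lemma Convex.mem_of_tendsto_sum_half_pow_smul {G : Set Y} (hGc : Convex ℝ G) (hGcl : IsClosed G)
    {q : ℕ → Y} (hq : ∀ k, q k ∈ G) {s : Y}
    (hs : Tendsto (fun m => ∑ k ∈ Finset.range m, (1 / 2 : ℝ) ^ (k + 1) • q k) atTop (𝓝 s)) :
    s ∈ G := by
  -- the weights `2^{-(k+1)}`, `k < m`, together with `2^{-m}` sum to `1`
  have hpartial : ∀ m, ∀ y ∈ G,
      ∑ k ∈ Finset.range m, (1 / 2 : ℝ) ^ (k + 1) • q k + (1 / 2 : ℝ) ^ m • y ∈ G := by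
    intro m
    induction m with
    | zero => simp
    | succ m ih =>
      intro y hy
      convert ih _ (hGc (hq m) hy (by norm_num) (by norm_num) (add_halves 1)) using 1
      rw [Finset.sum_range_succ]
      module
  have htail : Tendsto (fun m => (1 / 2 : ℝ) ^ m • q 0) atTop (𝓝 0) := by
    simpa using (tendsto_pow_atTop_nhds_zero_of_lt_one (by norm_num : (0:ℝ) ≤ 1 / 2)
      (by norm_num)).smul_const (q 0)
  exact hGcl.mem_of_tendsto (by simpa using hs.add htail)
    (Eventually.of_forall fun m => hpartial m _ (hq 0))


lemma exists_seq_two_smul_sub_mem_of_ball_subset_closure {A : Set Z} {z₀ z : Z} {ρ : ℝ}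
    (hρ : 0 < ρ) (hA : ball z₀ (2 * ρ) ⊆ closure A) (hz : z ∈ ball z₀ ρ) :
    ∃ zs : ℕ → Z, zs 0 = z ∧ (∀ k, (2:ℝ) • zs k - zs (k + 1) ∈ A) ∧ ∀ k, ‖zs k - z‖ ≤ ρ := by
  have happrox : ∀ (k : ℕ) (t : Z), ∃ a,
      t ∈ ball z₀ (2 * ρ) → a ∈ A ∧ ‖t - a‖ < ρ / 2 ^ (k + 1) := by
    intro k t
    by_cases ht : t ∈ ball z₀ (2 * ρ)
    · obtain ⟨a, ha, hd⟩ := Metric.mem_closure_iff.1 (hA ht) (ρ / 2 ^ (k + 1)) (by positivity)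
      exact ⟨a, fun _ => ⟨ha, by rwa [← dist_eq_norm]⟩⟩
    · exact ⟨0, fun h => absurd h ht⟩
  choose next hnext using happrox
  -- each step moves `zs k` by its approximation error, of size `< ρ / 2 ^ (k + 1)`
  let zs : ℕ → Z := fun k => Nat.rec (motive := fun _ => Z) z (fun k t => (2:ℝ) • t - next k t) k
  have hzs_succ : ∀ k, zs (k + 1) = (2:ℝ) • zs k - next k (zs k) := fun _ => rfl
  rw [mem_ball, dist_eq_norm] at hz
  have hin : ∀ k, ‖zs k - z‖ ≤ ρ - ρ / 2 ^ k → zs k ∈ ball z₀ (2 * ρ) := by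
    intro k hk
    have : 0 < ρ / 2 ^ k := by positivity
    rw [mem_ball, dist_eq_norm]
    calc ‖zs k - z₀‖ = ‖(zs k - z) + (z - z₀)‖ := by rw [sub_add_sub_cancel]
      _ ≤ ‖zs k - z‖ + ‖z - z₀‖ := norm_add_le _ _
      _ < 2 * ρ := by linarith
  have hdrift : ∀ k, ‖zs k - z‖ ≤ ρ - ρ / 2 ^ k := by
    intro k
    induction k with
    | zero => simp [zs]
    | succ k ih =>
      have hstep := (hnext k (zs k) (hin k ih)).2
      have hhalf : ρ / 2 ^ k = 2 * (ρ / 2 ^ (k + 1)) := by rw [pow_succ]; field_simp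
      calc ‖zs (k + 1) - z‖ = ‖(zs k - z) + (zs k - next k (zs k))‖ := by
            rw [hzs_succ]; congr 1; module
        _ ≤ ‖zs k - z‖ + ‖zs k - next k (zs k)‖ := norm_add_le _ _
        _ ≤ ρ - ρ / 2 ^ (k + 1) := by linarith
  refine ⟨zs, rfl, fun k => ?_, fun k => (hdrift k).trans (by linarith [hdrift k,
    (by positivity : 0 ≤ ρ / 2 ^ k)])⟩
  rw [hzs_succ, sub_sub_cancel]
  exact (hnext k _ (hin k (hdrift k))).1

lemma exists_tendsto_sum_half_pow_smul_of_ball_subset_closure {A : Set Z} {z₀ z : Z} {ρ : ℝ}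
    (hρ : 0 < ρ) (hA : ball z₀ (2 * ρ) ⊆ closure A) (hz : z ∈ ball z₀ ρ) :
    ∃ a : ℕ → Z, (∀ k, a k ∈ A) ∧
      Tendsto (fun m => ∑ k ∈ Finset.range m, (1 / 2 : ℝ) ^ (k + 1) • a k) atTop (𝓝 z) := by
  obtain ⟨zs, hzs0, hA', hdrift⟩ := exists_seq_two_smul_sub_mem_of_ball_subset_closure hρ hA hz
  refine ⟨fun k => (2:ℝ) • zs k - zs (k + 1), hA', ?_⟩
  have htele : ∀ m, ∑ k ∈ Finset.range m, (1 / 2 : ℝ) ^ (k + 1) • ((2:ℝ) • zs k - zs (k + 1))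
      = z - (1 / 2 : ℝ) ^ m • zs m := by
    intro m
    have hterm : ∀ k, (1 / 2 : ℝ) ^ (k + 1) • ((2:ℝ) • zs k - zs (k + 1))
        = (1 / 2 : ℝ) ^ k • zs k - (1 / 2 : ℝ) ^ (k + 1) • zs (k + 1) := fun k => by module
    simp only [hterm, Finset.sum_range_sub', pow_zero, one_smul, hzs0]
  simp only [htele]
  have hbdd : ∀ m, ‖(1 / 2 : ℝ) ^ m • zs m‖ ≤ (1 / 2 : ℝ) ^ m * (‖z‖ + ρ) := by
    intro m
    rw [norm_smul, Real.norm_of_nonneg (by positivity)]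
    gcongr
    calc ‖zs m‖ = ‖(zs m - z) + z‖ := by rw [sub_add_cancel]
      _ ≤ ‖zs m - z‖ + ‖z‖ := norm_add_le _ _
      _ ≤ ‖z‖ + ρ := by linarith [hdrift m]
  have hgeom := (tendsto_pow_atTop_nhds_zero_of_lt_one (by norm_num : (0:ℝ) ≤ 1 / 2)
    (by norm_num)).mul_const (‖z‖ + ρ)
  rw [zero_mul] at hgeom
  simpa using tendsto_const_nhds.sub (squeeze_zero_norm hbdd hgeom)

lemma exists_mem_norm_le_of_ball_subset_closure [CompleteSpace Y] {G : Set (Z × Y)}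
    (hGc : Convex ℝ G) (hGcl : IsClosed G) {z₀ z : Z} {ρ N : ℝ} (hρ : 0 < ρ)
    (hA : ball z₀ (2 * ρ) ⊆ closure {z | ∃ v, (z, v) ∈ G ∧ ‖v‖ ≤ N}) (hz : z ∈ ball z₀ ρ) :
    ∃ v, (z, v) ∈ G ∧ ‖v‖ ≤ N := by
  obtain ⟨a, ha, hsum⟩ := exists_tendsto_sum_half_pow_smul_of_ball_subset_closure hρ hA hz
  choose v hv hvN using ha
  have hbound : ∀ k, ‖(1 / 2 : ℝ) ^ (k + 1) • v k‖ ≤ N / 2 / 2 ^ k := by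
    intro k
    rw [norm_smul, Real.norm_of_nonneg (by positivity)]
    calc (1 / 2 : ℝ) ^ (k + 1) * ‖v k‖ ≤ (1 / 2 : ℝ) ^ (k + 1) * N := by gcongr; exact hvN k
      _ = N / 2 / 2 ^ k := by rw [div_pow, one_pow, pow_succ]; field_simp
  have hvsum := (Summable.of_norm_bounded (hasSum_geometric_two' N).summable hbound).hasSum
  refine ⟨_, hGc.mem_of_tendsto_sum_half_pow_smul hGcl (q := fun k => (a k, v k)) hv ?_,
    hvsum.norm_le_of_bounded (hasSum_geometric_two' N) hbound⟩
  rw [Prod.tendsto_iff]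
  simp only [Prod.fst_sum, Prod.snd_sum, Prod.smul_fst, Prod.smul_snd]
  exact ⟨hsum, hvsum.tendsto_sum_nat⟩

lemma exists_ball_forall_exists_mem_norm_le [CompleteSpace Z] [CompleteSpace Y]
    {G : Set (Z × Y)} (hGc : Convex ℝ G) (hGcl : IsClosed G) (hG : ∀ z, ∃ v, (z, v) ∈ G) :
    ∃ c : Z, ∃ ρ > 0, ∃ M : ℝ, ∀ z ∈ ball c ρ, ∃ v, (z, v) ∈ G ∧ ‖v‖ ≤ M := by
  have hcover : ⋃ n : ℕ, closure {z | ∃ v, (z, v) ∈ G ∧ ‖v‖ ≤ n} = univ := by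
    refine eq_univ_of_forall fun z => ?_
    obtain ⟨v, hv⟩ := hG z
    obtain ⟨n, hn⟩ := exists_nat_ge ‖v‖
    exact mem_iUnion.2 ⟨n, subset_closure ⟨v, hv, hn⟩⟩
  obtain ⟨N, z₀, hz₀⟩ := nonempty_interior_of_iUnion_of_closed (fun _ => isClosed_closure) hcover
  obtain ⟨ε, hε, hball⟩ := Metric.isOpen_iff.1 isOpen_interior z₀ hz₀
  refine ⟨z₀, ε / 2, half_pos hε, N, fun z hz =>
    exists_mem_norm_le_of_ball_subset_closure hGc hGcl (half_pos hε) ?_ hz⟩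
  rw [mul_div_cancel₀ _ two_ne_zero]
  exact hball.trans interior_subset

end RobinsonUrsescu

lemma continuous_comp_of_isClosed_convex_gph_singleton_add {α β : Type*}
    [NormedAddCommGroup α] [NormedSpace ℝ α] [CompleteSpace α]
    [NormedAddCommGroup β] [NormedSpace ℝ β] [CompleteSpace β]
    {f : α → β} {K : Set β} {ψ : β →L[ℝ] ℝ} (hK0 : 0 ∈ K) (hψ : ∀ k ∈ K, 0 ≤ ψ k)
    (hconv : Convex ℝ (gph fun u => ({f u} : Set β) + K))
    (hcl : IsClosed (gph fun u => ({f u} : Set β) + K)) :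
    Continuous fun u => ψ (f u) := by
  have hg := convexOn_comp_of_convex_gph_singleton_add hK0 hψ hconv
  have hfull : ∀ u, ∃ v, (u, v) ∈ gph fun u => ({f u} : Set β) + K :=
    fun u => ⟨f u, mem_singleton_add_iff.2 (by simpa using hK0)⟩
  obtain ⟨c, ρ, hρ, M, hM⟩ := exists_ball_forall_exists_mem_norm_le hconv hcl hfull
  have hbdd : (𝓝 c).IsBoundedUnder (· ≤ ·) fun u => ψ (f u) := by
    refine isBoundedUnder_of_eventually_le (a := ‖ψ‖ * M)
      (eventually_of_mem (Metric.ball_mem_nhds c hρ) fun u hu => ?_)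
    obtain ⟨v, hv, hvM⟩ := hM u hu
    have hk := hψ _ (mem_singleton_add_iff.1 hv)
    rw [map_sub] at hk
    calc ψ (f u) ≤ ψ v := by linarith
      _ ≤ ‖ψ‖ * ‖v‖ := (Real.le_norm_self _).trans (ψ.le_opNorm v)
      _ ≤ ‖ψ‖ * M := by gcongr
  have htfae := (hg.continuousOn_tfae isOpen_univ univ_nonempty).out 3 1
  exact continuousOn_univ.1 (htfae.1 ⟨c, mem_univ c, hbdd⟩)

section MoreauRockafellar

variable {Z : Type*} [NormedAddCommGroup Z] [NormedSpace ℝ Z] {g : Z → ℝ} {Ω : Set Z} {z₀ : Z}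

lemma ContinuousLinearMap.apply_prod_real (φ : Z × ℝ →L[ℝ] ℝ) (z : Z) (s : ℝ) :
    φ (z, s) = φ (z, 0) + s * φ (0, 1) := by
  rw [← smul_eq_mul, ← map_smul, ← map_add, Prod.smul_mk, smul_zero, smul_eq_mul, mul_one,
    Prod.mk_add_mk, add_zero, zero_add]

/-- A non-vertical hyperplane `ℓ z + c s = u` separating the epigraph of `g` from the hypograph
over `Ω` of the affine minorant `g z₀ + W (· - z₀)`. -/
lemma ConvexOn.exists_affine_separation_of_le_on_convex (hg : ConvexOn ℝ univ g)
    (hgc : Continuous g) (hΩ : Convex ℝ Ω) (hz₀ : z₀ ∈ Ω) (W : Z →L[ℝ] ℝ)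
    (hW : ∀ z ∈ Ω, W (z - z₀) ≤ g z - g z₀) :
    ∃ (ℓ : Z →L[ℝ] ℝ) (c u : ℝ), c < 0 ∧ (∀ z, ℓ z + g z * c ≤ u) ∧
      ∀ z ∈ Ω, u ≤ ℓ z + (g z₀ + W (z - z₀)) * c := by
  have hA : IsOpen {p : Z × ℝ | p.1 ∈ univ ∧ g p.1 < p.2} := by
    simpa using isOpen_lt (hgc.comp continuous_fst) continuous_snd
  have hminorant : ConcaveOn ℝ Ω fun z => g z₀ + W (z - z₀) := by
    refine ((concaveOn_const (g z₀ - W z₀) hΩ).add ((W : Z →ₗ[ℝ] ℝ).concaveOn hΩ)).congr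
      fun z _ => ?_
    simp only [Pi.add_apply, ContinuousLinearMap.coe_coe, map_sub]
    ring
  have hAB : Disjoint {p : Z × ℝ | p.1 ∈ univ ∧ g p.1 < p.2}
      {p : Z × ℝ | p.1 ∈ Ω ∧ p.2 ≤ g z₀ + W (p.1 - z₀)} :=
    disjoint_left.2 fun p hpA hpB => by linarith [hpA.2, hpB.2, hW _ hpB.1]
  obtain ⟨φ, u, hφA, hφB⟩ := geometric_hahn_banach_open hg.convex_strict_epigraph hA
    hminorant.convex_hypograph hAB
  have hc : φ (0, 1) < 0 := by
    have h₁ := hφA (z₀, g z₀ + 1) ⟨trivial, by simp⟩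
    have h₂ := hφB (z₀, g z₀) ⟨hz₀, by simp⟩
    rw [φ.apply_prod_real] at h₁ h₂
    linarith
  refine ⟨φ.comp (.inl ℝ Z ℝ), φ (0, 1), u, hc, fun z => ?_, fun z hz => ?_⟩
  · refine le_of_forall_pos_lt_add fun ε hε => ?_
    have h := hφA (z, g z + ε / -φ (0, 1))
      ⟨trivial, by simp only; linarith [div_pos hε (neg_pos.2 hc)]⟩
    rw [φ.apply_prod_real, add_mul, div_mul_eq_mul_div, div_neg, mul_div_cancel_right₀ _ hc.ne]
      at h
    simp only [ContinuousLinearMap.comp_apply, ContinuousLinearMap.inl_apply]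
    linarith
  · have h := hφB (z, g z₀ + W (z - z₀)) ⟨hz, le_rfl⟩
    rwa [φ.apply_prod_real] at h

/-- Moreau–Rockafellar: a subgradient `W` of `g + δ_Ω` at `z₀` is `ζ ∈ ∂g(z₀)` plus a normal
`W - ζ` to `Ω`. -/
lemma ConvexOn.exists_mem_subdiff_of_le_on_convex (hg : ConvexOn ℝ univ g) (hgc : Continuous g)
    (hΩ : Convex ℝ Ω) (hz₀ : z₀ ∈ Ω) (W : Z →L[ℝ] ℝ) (hW : ∀ z ∈ Ω, W (z - z₀) ≤ g z - g z₀) :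
    ∃ ζ ∈ subdiff g z₀, ∀ z ∈ Ω, W (z - z₀) ≤ ζ (z - z₀) := by
  obtain ⟨ℓ, c, u, hc, hepi, hhyp⟩ := hg.exists_affine_separation_of_le_on_convex hgc hΩ hz₀ W hW
  have hu := hepi z₀
  have hu' := hhyp z₀ hz₀
  rw [sub_self, map_zero, add_zero] at hu'
  refine ⟨(-c)⁻¹ • ℓ, fun z => ?_, fun z hz => ?_⟩
  · have := hepi z
    rw [smul_apply, smul_eq_mul, map_sub ℓ, inv_mul_le_iff₀ (neg_pos.2 hc)]
    nlinarith
  · have := hhyp z hz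
    rw [smul_apply, smul_eq_mul, map_sub ℓ, le_inv_mul_iff₀ (neg_pos.2 hc)]
    nlinarith

end MoreauRockafellar

lemma mem_marginal_add_iff {P X Y : Type*} [AddCommGroup Y] {f : P × X → Y} {K : Set Y}
    {C : P → Set X} {F : P → Set Y} (hF : ∀ p, F p = {y : Y | ∃ x ∈ C p, y = f (p, x)})
    {p : P} {y : Y} : y ∈ F p + K ↔ ∃ x ∈ C p, y ∈ ({f (p, x)} : Set Y) + K := by
  rw [hF]
  constructor
  · rintro ⟨_, ⟨x, hx, rfl⟩, k, hk, rfl⟩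
    exact ⟨x, hx, mem_singleton_add_iff.2 (by simpa using hk)⟩
  · rintro ⟨x, hx, hk⟩
    exact ⟨_, ⟨x, hx, rfl⟩, _, mem_singleton_add_iff.1 hk, add_sub_cancel _ _⟩

section Marginal

variable {P X Y : Type*} [NormedAddCommGroup P] [NormedSpace ℝ P]
  [NormedAddCommGroup X] [NormedSpace ℝ X] [NormedAddCommGroup Y] [NormedSpace ℝ Y]
  {f : P × X → Y} {K : Set Y} {C : P → Set X} {F : P → Set Y}

lemma convex_gph_marginal_add (hfconv : Convex ℝ (gph fun q => ({f q} : Set Y) + K))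
    (hCconv : Convex ℝ (gph C)) (hF : ∀ p, F p = {y : Y | ∃ x ∈ C p, y = f (p, x)}) :
    Convex ℝ (gph fun p => F p + K) := by
  rintro ⟨p₁, y₁⟩ h₁ ⟨p₂, y₂⟩ h₂ s t hs ht hst
  obtain ⟨x₁, hx₁, hy₁⟩ := (mem_marginal_add_iff hF).1 h₁
  obtain ⟨x₂, hx₂, hy₂⟩ := (mem_marginal_add_iff hF).1 h₂
  exact (mem_marginal_add_iff hF).2 ⟨s • x₁ + t • x₂,
    hCconv (x := (p₁, x₁)) (y := (p₂, x₂)) hx₁ hx₂ hs ht hst,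
    hfconv (x := ((p₁, x₁), y₁)) (y := ((p₂, x₂), y₂)) hy₁ hy₂ hs ht hst⟩

theorem coderiv_marginal_add_eq [CompleteSpace P] [CompleteSpace X] [CompleteSpace Y]
    (hK0 : 0 ∈ K) (hfconv : Convex ℝ (gph fun q => ({f q} : Set Y) + K))
    (hfcl : IsClosed (gph fun q => ({f q} : Set Y) + K)) (hCconv : Convex ℝ (gph C))
    (hF : ∀ p, F p = {y : Y | ∃ x ∈ C p, y = f (p, x)}) {pb : P} {xb : X} (hxb : xb ∈ C pb)
    (ψ : Y →L[ℝ] ℝ) :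
    coderiv (fun p => F p + K) pb (f (pb, xb)) ψ
      = {w : P →L[ℝ] ℝ | ∃ pstar : P →L[ℝ] ℝ, ∃ xstar : X →L[ℝ] ℝ,
          pstar.coprod xstar
            ∈ coderiv (fun q : P × X => ({f q} : Set Y) + K) (pb, xb) (f (pb, xb)) ψ ∧
          ∃ qstar ∈ coderiv C pb xb xstar, w = pstar + qstar} := by
  ext w
  constructor
  · intro hw
    have hψ := nonneg_of_mem_coderiv_add (by rw [hF]; exact ⟨xb, hxb, rfl⟩) hw
    have hsub : ∀ z ∈ gph C, w.comp (.fst ℝ P X) (z - (pb, xb)) ≤ ψ (f z) - ψ (f (pb, xb)) := by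
      intro z hz
      have h := hw z.1 (f z) ((mem_marginal_add_iff hF).2
        ⟨z.2, hz, mem_singleton_add_iff.2 (by simpa using hK0)⟩)
      rw [map_sub ψ] at h
      simpa using h
    obtain ⟨ζ, hζ, hζC⟩ := (convexOn_comp_of_convex_gph_singleton_add hK0 hψ hfconv)
      |>.exists_mem_subdiff_of_le_on_convex
        (continuous_comp_of_isClosed_convex_gph_singleton_add hK0 hψ hfconv hfcl) hCconv hxb _ hsub
    refine ⟨ζ.comp (.inl ℝ P X), ζ.comp (.inr ℝ P X), ?_, w - ζ.comp (.inl ℝ P X),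
      fun u x hx => ?_, by abel⟩
    · rwa [ζ.coprod_comp_inl_inr, coderiv_singleton_add_eq_subdiff hK0 hψ]
    · have h := hζC (u, x) hx
      rw [← ζ.comp_inl_add_comp_inr] at h
      simp only [ContinuousLinearMap.comp_apply, ContinuousLinearMap.coe_fst',
        sub_apply, Prod.fst_sub, Prod.snd_sub] at h ⊢
      linarith
  · rintro ⟨pstar, xstar, hpx, qstar, hq, rfl⟩ u y hy
    obtain ⟨x, hx, hyx⟩ := (mem_marginal_add_iff hF).1 hy
    have h₁ := hpx (u, x) y hyx
    have h₂ := hq u x hx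
    simp only [ContinuousLinearMap.coprod_apply, Prod.mk_sub_mk,
      add_apply] at h₁ ⊢
    linarith

end Marginal

theorem stmt15_general
    {P X Y : Type*}
    [NormedAddCommGroup P] [NormedSpace ℝ P] [CompleteSpace P]
    [NormedAddCommGroup X] [NormedSpace ℝ X] [CompleteSpace X]
    [NormedAddCommGroup Y] [NormedSpace ℝ Y] [CompleteSpace Y]
    (K : Set Y)
    -- K̃ is a closed convex cone contained in int K ∪ {0}
    (Kt : Set Y) (hKtconv : Convex ℝ Kt)
    (hKtcone : ∀ t : ℝ, 0 ≤ t → ∀ y ∈ Kt, t • y ∈ Kt)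
    -- f is K̃-convex and K̃-closed
    (f : P × X → Y)
    (hfconv : Convex ℝ {q : (P × X) × Y | q.2 ∈ ({f q.1} : Set Y) + Kt})
    (hfcl : IsClosed {q : (P × X) × Y | q.2 ∈ ({f q.1} : Set Y) + Kt})
    -- C is a closed convex set-valued map
    (C : P → Set X) (hCconv : Convex ℝ (gph C))
    -- F(p) = {f(p,x) : x ∈ C(p)},  𝓦(p) = WMin_K F(p)
    (F : P → Set Y) (hF : ∀ p, F p = {y : Y | ∃ x ∈ C p, y = f (p, x)})
    (Fw : P → Set Y)
    (hFw : ∀ p, Fw p = {a ∈ F p | (F p - {a}) ∩ (-(interior K)) = ∅})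
    -- (pb, xb) ∈ gph S^w, yb = f(pb, xb)
    (pb : P) (xb : X) (hxbC : xb ∈ C pb)
    (yb : Y) (hyb : yb = f (pb, xb))
    -- (iii) F is K̃-dominated by 𝓦 near pb
    (hdom : ∃ U ∈ nhds pb, ∀ p ∈ U, F p ⊆ Fw p + Kt) :
    (∀ ψ : Y →L[ℝ] ℝ,
        fCoderiv (fun p => Fw p + Kt) pb yb ψ
          = {w : P →L[ℝ] ℝ | ∃ pstar : P →L[ℝ] ℝ, ∃ xstar : X →L[ℝ] ℝ,
              pstar.coprod xstar
                ∈ coderiv (fun q : P × X => ({f q} : Set Y) + Kt) (pb, xb) (f (pb, xb)) ψ ∧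
              ∃ qstar ∈ coderiv C pb xb xstar, w = pstar + qstar})
      ∧ (∀ ψ : Y →L[ℝ] ℝ, (∀ k ∈ Kt, 0 ≤ ψ k) →
          fCoderiv (fun p => Fw p + Kt) pb yb ψ
            = {w : P →L[ℝ] ℝ | ∃ pstar : P →L[ℝ] ℝ, ∃ xstar : X →L[ℝ] ℝ,
                pstar.coprod xstar ∈ subdiff (fun q : P × X => ψ (f q)) (pb, xb) ∧
                ∃ qstar ∈ coderiv C pb xb xstar, w = pstar + qstar}) := by
  obtain ⟨U, hU, hUdom⟩ := hdom
  subst hyb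
  have hybF : f (pb, xb) ∈ F pb := by rw [hF]; exact ⟨xb, hxbC, rfl⟩
  have hKt0 : (0 : Y) ∈ Kt := by
    obtain ⟨_, -, k, hk, -⟩ := hUdom pb (mem_of_mem_nhds hU) hybF
    simpa using hKtcone 0 le_rfl k hk
  have hKtadd : Kt + Kt ⊆ Kt :=
    add_subset_iff.2 fun _ h₁ _ h₂ => add_mem_of_convex_of_smul_mem hKtconv hKtcone h₁ h₂
  have hloc : ∀ᶠ p in 𝓝 pb, F p + Kt ⊆ Fw p + Kt := mem_of_superset hU fun p hp =>
    calc F p + Kt ⊆ Fw p + Kt + Kt := add_subset_add_right (hUdom p hp)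
      _ = Fw p + (Kt + Kt) := add_assoc _ _ _
      _ ⊆ Fw p + Kt := add_subset_add_left hKtadd
  have hFwF : ∀ p, Fw p + Kt ⊆ F p + Kt := fun p =>
    add_subset_add_right fun a ha => ((hFw p).subset ha).1
  have hfrechet : ∀ ψ, fCoderiv (fun p => Fw p + Kt) pb (f (pb, xb)) ψ
      = coderiv (fun p => F p + Kt) pb (f (pb, xb)) ψ := fun ψ =>
    (fCoderiv_subset_coderiv (convex_gph_marginal_add hfconv hCconv hF)
      (by simpa using add_mem_add hybF hKt0) hloc).antisymm (coderiv_subset_fCoderiv hFwF)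
  have hchain := coderiv_marginal_add_eq hKt0 hfconv hfcl hCconv hF hxbC
  refine ⟨fun ψ => (hfrechet ψ).trans (hchain ψ), fun ψ hψ => ?_⟩
  rw [hfrechet, hchain]
  simp_rw [coderiv_singleton_add_eq_subdiff hKt0 hψ]

/-- the weak perturbation map version.  With `K̃ ⊆ int K ∪ {0}` a closed
convex cone, `f` `K̃`-convex and `K̃`-closed, `𝓦(p) = WMin_K F(p)` and `F`
`K̃`-dominated by `𝓦` near `pb`, for every `y* ∈ Y*`:
`D̂*(𝓦 + K̃)(pb, yb)(y*) = ⋃_{(p*,x*) ∈ D*(f + K̃)(pb, xb)(y*)} {p* + D*C(pb, xb)(x*)}`;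
in particular, for every `y* ∈ K̃*` the union can be taken over `∂⟨y*, f⟩(pb, xb)`. -/
theorem stmt15
    {P X Y : Type*}
    [NormedAddCommGroup P] [NormedSpace ℝ P] [CompleteSpace P]
    [NormedAddCommGroup X] [NormedSpace ℝ X] [CompleteSpace X]
    [NormedAddCommGroup Y] [NormedSpace ℝ Y] [CompleteSpace Y]
    -- K is a pointed closed convex cone in Y with nonempty interior
    (K : Set Y) (hKconv : Convex ℝ K) (hKclosed : IsClosed K)
    (hKcone : ∀ t : ℝ, 0 ≤ t → ∀ y ∈ K, t • y ∈ K)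
    (hKpointed : K ∩ (-K) = {0}) (hKint : (interior K).Nonempty)
    -- K̃ is a closed convex cone contained in int K ∪ {0}
    (Kt : Set Y) (hKtconv : Convex ℝ Kt) (hKtclosed : IsClosed Kt)
    (hKtcone : ∀ t : ℝ, 0 ≤ t → ∀ y ∈ Kt, t • y ∈ Kt)
    (hKtsub : Kt ⊆ interior K ∪ {0})
    -- f is K̃-convex and K̃-closed
    (f : P × X → Y)
    (hfconv : Convex ℝ {q : (P × X) × Y | q.2 ∈ ({f q.1} : Set Y) + Kt})
    (hfcl : IsClosed {q : (P × X) × Y | q.2 ∈ ({f q.1} : Set Y) + Kt})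
    -- C is a closed convex set-valued map
    (C : P → Set X) (hCconv : Convex ℝ (gph C)) (hCcl : IsClosed (gph C))
    -- F(p) = {f(p,x) : x ∈ C(p)},  𝓦(p) = WMin_K F(p)
    (F : P → Set Y) (hF : ∀ p, F p = {y : Y | ∃ x ∈ C p, y = f (p, x)})
    (Fw : P → Set Y)
    (hFw : ∀ p, Fw p = {a ∈ F p | (F p - {a}) ∩ (-(interior K)) = ∅})
    -- (pb, xb) ∈ gph S^w, yb = f(pb, xb)
    (pb : P) (xb : X) (hxbC : xb ∈ C pb) (hsol : f (pb, xb) ∈ Fw pb)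
    (yb : Y) (hyb : yb = f (pb, xb))
    -- (i) ℝ⁺(rge H − dom f) is a closed linear subspace of P × X, H(p) = {p} × C(p)
    (hqual1 : ∃ S : Submodule ℝ (P × X), IsClosed (S : Set (P × X)) ∧
      {w : P × X | ∃ t : ℝ, 0 ≤ t ∧
        ∃ u ∈ ⋃ p : P, ({p} : Set P) ×ˢ C p, ∃ v : P × X, w = t • (u - v)} = S)
    -- (ii) ℝ⁺(P − dom C) is a closed linear subspace of P
    (hqual2 : ∃ S : Submodule ℝ P, IsClosed (S : Set P) ∧
      {w : P | ∃ t : ℝ, 0 ≤ t ∧ ∃ u : P, ∃ v ∈ dom C, w = t • (u - v)} = S)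
    -- (iii) F is K̃-dominated by 𝓦 near pb
    (hdom : ∃ U ∈ nhds pb, ∀ p ∈ U, F p ⊆ Fw p + Kt) :
    (∀ ψ : Y →L[ℝ] ℝ,
        fCoderiv (fun p => Fw p + Kt) pb yb ψ
          = {w : P →L[ℝ] ℝ | ∃ pstar : P →L[ℝ] ℝ, ∃ xstar : X →L[ℝ] ℝ,
              pstar.coprod xstar
                ∈ coderiv (fun q : P × X => ({f q} : Set Y) + Kt) (pb, xb) (f (pb, xb)) ψ ∧
              ∃ qstar ∈ coderiv C pb xb xstar, w = pstar + qstar})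
      ∧ (∀ ψ : Y →L[ℝ] ℝ, (∀ k ∈ Kt, 0 ≤ ψ k) →
          fCoderiv (fun p => Fw p + Kt) pb yb ψ
            = {w : P →L[ℝ] ℝ | ∃ pstar : P →L[ℝ] ℝ, ∃ xstar : X →L[ℝ] ℝ,
                pstar.coprod xstar ∈ subdiff (fun q : P × X => ψ (f q)) (pb, xb) ∧
                ∃ qstar ∈ coderiv C pb xb xstar, w = pstar + qstar}) :=
  stmt15_general K Kt hKtconv hKtcone f hfconv hfcl C hCconv F hF Fw hFw pb xb hxbC yb hyb hdom
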